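/- Let r ≥ 1. Let (H_T)_{T∈ℕ} be a sequence of random symmetric r×r matrices with √T·H_T = O_p(1), and let (A_T)_{T∈ℕ} be a sequence of random r×r matrices with T(A_T A_Tᵀ − I_r) = O_p(1). Then T·(‖A_TᵀH_T A_T‖² − ‖H_T‖²) → 0 in probability as T → ∞. -/

import Mathlib

/-!
Put `B = A Aᵀ - 1`. Cyclicity of the trace gives
`‖AᵀHA‖² - ‖H‖² = tr (Hᵀ ((1 + B) H (1 + B) - H))`, so Cauchy–Schwarz and submultiplicativity of
the Frobenius norm bound its absolute value by `‖H‖² (2‖B‖ + ‖B‖²)`. After multiplication by `T`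
this is at most `T⁻¹ X² (2Y + Y²)` with `X = ‖√T H‖` and `Y = ‖T B‖`. Both are bounded in
probability, hence so is any continuous function of them, and `T⁻¹` times a sequence bounded in
probability tends to `0` in probability.
-/

open MeasureTheory Filter Matrix Finset
open scoped Topology ENNReal NNReal Kronecker

noncomputable section

/-- Squared Frobenius norm of a real matrix. -/
def frobSq {ι κ : Type*} [Fintype ι] [Fintype κ] (M : Matrix ι κ ℝ) : ℝ :=
  ∑ i, ∑ j, (M i j) ^ 2

/-- Frobenius norm of a real matrix. -/
def frobNorm {ι κ : Type*} [Fintype ι] [Fintype κ] (M : Matrix ι κ ℝ) : ℝ :=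
  Real.sqrt (frobSq M)

/-- Euclidean norm of a vector. -/
def euclNorm {ι : Type*} [Fintype ι] (x : ι → ℝ) : ℝ :=
  Real.sqrt (∑ i, (x i) ^ 2)

/-- `X_T = O_p(1)` (boundedness in probability), matrix version, Frobenius norm. -/
def MatIsOp {Ω ι κ : Type*} [MeasurableSpace Ω] [Fintype ι] [Fintype κ]
    (μ : Measure Ω) (X : ℕ → Ω → Matrix ι κ ℝ) : Prop :=
  ∀ ε : ℝ, 0 < ε → ∃ M : ℝ, 0 < M ∧ ∀ T, μ {ω | M < frobNorm (X T ω)} ≤ ENNReal.ofReal ε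

/-- `X_T = O_p(1)` (boundedness in probability), vector version, Euclidean norm. -/
def VecIsOp {Ω ι : Type*} [MeasurableSpace Ω] [Fintype ι]
    (μ : Measure Ω) (X : ℕ → Ω → ι → ℝ) : Prop :=
  ∀ ε : ℝ, 0 < ε → ∃ M : ℝ, 0 < M ∧ ∀ T, μ {ω | M < euclNorm (X T ω)} ≤ ENNReal.ofReal ε

/-- Convergence to zero in probability, matrix version (Frobenius norm). -/
def MatTendstoP0 {Ω ι κ : Type*} [MeasurableSpace Ω] [Fintype ι] [Fintype κ]
    (μ : Measure Ω) (X : ℕ → Ω → Matrix ι κ ℝ) : Prop :=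
  ∀ ε : ℝ, 0 < ε → Tendsto (fun T => μ {ω | ε < frobNorm (X T ω)}) atTop (𝓝 0)

/-- Convergence to zero in probability, real-valued version. -/
def RealTendstoP0 {Ω : Type*} [MeasurableSpace Ω]
    (μ : Measure Ω) (X : ℕ → Ω → ℝ) : Prop :=
  ∀ ε : ℝ, 0 < ε → Tendsto (fun T => μ {ω | ε < |X T ω|}) atTop (𝓝 0)

/-- Convergence in distribution: weak convergence of the laws to the measure `ν`. -/
def TendstoInDist {Ω E : Type*} [MeasurableSpace Ω] [MeasurableSpace E] [TopologicalSpace E]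
    (μ : Measure Ω) (X : ℕ → Ω → E) (ν : Measure E) : Prop :=
  ∀ f : BoundedContinuousFunction E ℝ,
    Tendsto (fun T => ∫ ω, f (X T ω) ∂μ) atTop (𝓝 (∫ x, f x ∂ν))

/-- The square root of a positive semidefinite matrix, as `Matrix.PosSemidef.sqrt` was defined
in the older Mathlib. -/
def posSemidefSqrt {ι : Type*} [Fintype ι] [DecidableEq ι] {A : Matrix ι ι ℝ}
    (hA : A.PosSemidef) : Matrix ι ι ℝ :=
  hA.1.eigenvectorUnitary.1 * diagonal ((↑) ∘ (Real.sqrt ∘ hA.1.eigenvalues)) *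
  (star hA.1.eigenvectorUnitary : Matrix ι ι ℝ)

open Classical in
/-- The centered (possibly degenerate) Gaussian distribution `N(0, V)` on `ι → ℝ`,
realized as the law of `V^{1/2} z` with `z` standard Gaussian. -/
def gaussianOfCov {ι : Type*} [Fintype ι] [DecidableEq ι] (V : Matrix ι ι ℝ) :
    Measure (ι → ℝ) :=
  if h : V.PosSemidef then
    Measure.map (fun z => (posSemidefSqrt h).mulVec z)
      (Measure.pi fun _ : ι => ProbabilityTheory.gaussianReal 0 1)
  else 0

/-- Chi-squared distribution with `k` degrees of freedom: Gamma, shape `k/2`, rate `1/2`. -/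
def chiSq (k : ℝ) : Measure ℝ := ProbabilityTheory.gammaMeasure (k / 2) (1 / 2)

open Classical in
/-- Inverse of the unique symmetric positive definite square root of `S`
(junk value `0` if `S` is not positive definite). -/
def invSqrt {ι : Type*} [Fintype ι] [DecidableEq ι] (S : Matrix ι ι ℝ) : Matrix ι ι ℝ :=
  if h : S.PosDef then (posSemidefSqrt h.posSemidef)⁻¹ else 0

/-- Column-vectorization of an `r × r` matrix, indexed by (column, row) pairs. -/
def vecM {r : ℕ} (M : Matrix (Fin r) (Fin r) ℝ) : Fin r × Fin r → ℝ :=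
  fun q => M q.2 q.1

/-- The commutation matrix `K_rr = ∑ i j, E_r^{ij} ⊗ E_r^{ji}`. -/
def commMatrix (r : ℕ) : Matrix (Fin r × Fin r) (Fin r × Fin r) ℝ :=
  ∑ i : Fin r, ∑ j : Fin r, single i j (1 : ℝ) ⊗ₖ single j i (1 : ℝ)

/-- The matrix `D_rr = ∑ i, E_r^{ii} ⊗ E_r^{ii}`. -/
def dblDiagMatrix (r : ℕ) : Matrix (Fin r × Fin r) (Fin r × Fin r) ℝ :=
  ∑ i : Fin r, single i i (1 : ℝ) ⊗ₖ single i i (1 : ℝ)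

/-- The all-ones matrix `J_r`. -/
def onesMat (r : ℕ) : Matrix (Fin r) (Fin r) ℝ := Matrix.of fun _ _ => 1

attribute [local instance] Matrix.frobeniusNormedAddCommGroup Matrix.frobeniusNormedSpace

theorem norm_mul_mul_sub_le {R : Type*} [SeminormedRing R] (s h : R) :
    ‖s * h * s - h‖ ≤ ‖h‖ * (2 * ‖s - 1‖ + ‖s - 1‖ ^ 2) := by
  calc ‖s * h * s - h‖ = ‖(s - 1) * h + h * (s - 1) + (s - 1) * h * (s - 1)‖ := by
        congr 1; noncomm_ring
    _ ≤ ‖s - 1‖ * ‖h‖ + ‖h‖ * ‖s - 1‖ + ‖s - 1‖ * ‖h‖ * ‖s - 1‖ := by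
        refine norm_add₃_le.trans (add_le_add_three (norm_mul_le _ _) (norm_mul_le _ _) ?_)
        exact (norm_mul_le _ _).trans
          (mul_le_mul_of_nonneg_right (norm_mul_le _ _) (norm_nonneg _))
    _ = ‖h‖ * (2 * ‖s - 1‖ + ‖s - 1‖ ^ 2) := by ring

section Frobenius

variable {m n : Type*} [Fintype m] [Fintype n]

theorem frobNorm_eq_norm (M : Matrix m n ℝ) : frobNorm M = ‖M‖ := by
  change _ = ‖WithLp.toLp 2 fun i => WithLp.toLp 2 (M i)‖
  rw [frobNorm, frobSq, PiLp.norm_eq_of_L2]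
  congr 1
  refine Finset.sum_congr rfl fun i _ => ?_
  rw [EuclideanSpace.norm_eq, Real.sq_sqrt (by positivity)]
  simp

theorem frobSq_eq_trace (M : Matrix m n ℝ) : frobSq M = (Mᵀ * M).trace := by
  simp only [frobSq, Matrix.trace, Matrix.diag, Matrix.mul_apply, Matrix.transpose_apply, sq]
  exact Finset.sum_comm

theorem abs_trace_mul_le (M : Matrix m n ℝ) (N : Matrix n m ℝ) :
    |(M * N).trace| ≤ ‖M‖ * ‖N‖ := by
  -- `tr (M N)` is the Euclidean inner product of the rows of `Mᵀ` with those of `N`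
  have h : (M * N).trace = inner ℝ
      (WithLp.toLp 2 fun j => WithLp.toLp 2 (Mᵀ j) : PiLp 2 fun _ : n => EuclideanSpace ℝ m)
      (WithLp.toLp 2 fun j => WithLp.toLp 2 (N j)) := by
    simp only [trace, diag_apply, mul_apply, PiLp.inner_apply, transpose_apply,
      RCLike.inner_apply, Real.ringHom_apply, mul_comm]
    exact Finset.sum_comm
  rw [h, ← Matrix.frobenius_norm_transpose M]
  exact abs_real_inner_le_norm _ _

theorem frobSq_transpose_mul_mul_sub (H : Matrix n n ℝ) (A : Matrix n m ℝ) :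
    frobSq (Aᵀ * H * A) - frobSq H = (Hᵀ * (A * Aᵀ * H * (A * Aᵀ) - H)).trace := by
  have hA : frobSq (Aᵀ * H * A) = (Hᵀ * (A * Aᵀ * H * (A * Aᵀ))).trace := by
    rw [frobSq_eq_trace]
    simp only [Matrix.transpose_mul, Matrix.transpose_transpose, Matrix.mul_assoc]
    rw [Matrix.trace_mul_comm]
    simp only [Matrix.mul_assoc]
  rw [hA, frobSq_eq_trace, Matrix.mul_sub, Matrix.trace_sub]

theorem abs_frobSq_transpose_mul_mul_sub_le [DecidableEq n] (H : Matrix n n ℝ) (A : Matrix n m ℝ) :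
    |frobSq (Aᵀ * H * A) - frobSq H| ≤ ‖H‖ ^ 2 * (2 * ‖A * Aᵀ - 1‖ + ‖A * Aᵀ - 1‖ ^ 2) := by
  let _ := Matrix.frobeniusNormedRing (m := n) (α := ℝ)
  rw [frobSq_transpose_mul_mul_sub]
  calc _ ≤ ‖Hᵀ‖ * ‖A * Aᵀ * H * (A * Aᵀ) - H‖ := abs_trace_mul_le _ _
    _ ≤ ‖H‖ * (‖H‖ * (2 * ‖A * Aᵀ - 1‖ + ‖A * Aᵀ - 1‖ ^ 2)) := by
        rw [Matrix.frobenius_norm_transpose]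
        exact mul_le_mul_of_nonneg_left (norm_mul_mul_sub_le _ _) (norm_nonneg _)
    _ = _ := by ring

end Frobenius

section BoundedInProb

variable {Ω : Type*} [MeasurableSpace Ω] {μ : Measure Ω}

def IsBoundedInProb (μ : Measure Ω) (X : ℕ → Ω → ℝ) : Prop :=
  ∀ ε : ℝ, 0 < ε → ∃ M : ℝ, ∀ T, μ {ω | M < |X T ω|} ≤ ENNReal.ofReal ε

theorem MatIsOp.isBoundedInProb_norm {m n : Type*} [Fintype m] [Fintype n]
    {X : ℕ → Ω → Matrix m n ℝ} (hX : MatIsOp μ X) : IsBoundedInProb μ fun T ω => ‖X T ω‖ := by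
  intro ε hε
  obtain ⟨M, -, hM⟩ := hX ε hε
  exact ⟨M, fun T => by simpa only [abs_norm, frobNorm_eq_norm] using hM T⟩

theorem IsBoundedInProb.comp₂ {X Y : ℕ → Ω → ℝ} (hX : IsBoundedInProb μ X)
    (hY : IsBoundedInProb μ Y) {g : ℝ → ℝ → ℝ} (hg : Continuous (Function.uncurry g)) :
    IsBoundedInProb μ fun T ω => g (X T ω) (Y T ω) := by
  intro ε hε
  obtain ⟨M₁, hM₁⟩ := hX (ε / 2) (half_pos hε)
  obtain ⟨M₂, hM₂⟩ := hY (ε / 2) (half_pos hε)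
  obtain ⟨C, hC⟩ := ((isCompact_closedBall (0 : ℝ) M₁).prod (isCompact_closedBall (0 : ℝ) M₂))
    |>.exists_bound_of_continuousOn hg.continuousOn
  refine ⟨C, fun T => ?_⟩
  have hsub : {ω | C < |g (X T ω) (Y T ω)|} ⊆ {ω | M₁ < |X T ω|} ∪ {ω | M₂ < |Y T ω|} := by
    intro ω hω
    by_contra hout
    simp only [Set.mem_union, Set.mem_ofPred_eq, not_or, not_lt] at hout
    have := hC (X T ω, Y T ω) ⟨by simpa using hout.1, by simpa using hout.2⟩
    exact (lt_irrefl C) (hω.trans_le this)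
  calc μ {ω | C < |g (X T ω) (Y T ω)|}
      ≤ μ {ω | M₁ < |X T ω|} + μ {ω | M₂ < |Y T ω|} :=
        (measure_mono hsub).trans (measure_union_le _ _)
    _ ≤ ENNReal.ofReal (ε / 2) + ENNReal.ofReal (ε / 2) := add_le_add (hM₁ T) (hM₂ T)
    _ = ENNReal.ofReal ε := by rw [← ENNReal.ofReal_add (by positivity) (by positivity), add_halves]

theorem IsBoundedInProb.realTendstoP0_mul {X : ℕ → Ω → ℝ} (hX : IsBoundedInProb μ X)
    {c : ℕ → ℝ} (hc : Tendsto c atTop (𝓝 0)) : RealTendstoP0 μ fun T ω => c T * X T ω := by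
  intro ε hε
  rw [ENNReal.tendsto_nhds_zero]
  intro η hη
  obtain ⟨δ, -, hδ, hδη⟩ := ENNReal.lt_iff_exists_real_btwn.1 hη
  obtain ⟨M, hM⟩ := hX δ (ENNReal.ofReal_pos.1 hδ)
  have hcM : ∀ᶠ T in atTop, |c T| * M < ε := by
    have hlim : Tendsto (fun T => |c T * M|) atTop (𝓝 0) := by
      simpa using (hc.mul_const M).abs
    filter_upwards [hlim.eventually (gt_mem_nhds hε)] with T hT
    rw [abs_mul] at hT
    exact (mul_le_mul_of_nonneg_left (le_abs_self M) (abs_nonneg _)).trans_lt hT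
  filter_upwards [hcM] with T hT
  refine le_trans (measure_mono fun ω hω => ?_) ((hM T).trans hδη.le)
  simp only [Set.mem_ofPred_eq, abs_mul] at hω ⊢
  by_contra! hle
  exact hT.not_ge (hω.le.trans (mul_le_mul_of_nonneg_left hle (abs_nonneg _)))

theorem RealTendstoP0.of_abs_le {Z W : ℕ → Ω → ℝ} (hW : RealTendstoP0 μ W)
    (h : ∀ T ω, |Z T ω| ≤ |W T ω|) : RealTendstoP0 μ Z := fun ε hε =>
  tendsto_of_tendsto_of_tendsto_of_le_of_le tendsto_const_nhds (hW ε hε) (fun _ => zero_le)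
    fun T => measure_mono fun _ hω => hω.trans_le (h T _)

end BoundedInProb

theorem abs_natCast_mul_frobSq_sub_le {m n : Type*} [Fintype m] [Fintype n] [DecidableEq n]
    (T : ℕ) (H : Matrix n n ℝ) (A : Matrix n m ℝ) :
    |T * (frobSq (Aᵀ * H * A) - frobSq H)| ≤
      |(T : ℝ)⁻¹ * (‖Real.sqrt T • H‖ ^ 2 *
        (2 * ‖(T : ℝ) • (A * Aᵀ - 1)‖ + ‖(T : ℝ) • (A * Aᵀ - 1)‖ ^ 2))| := by
  rcases Nat.eq_zero_or_pos T with rfl | hT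
  -- at `T = 0` both sides vanish, the right one because `(0 : ℝ)⁻¹ = 0`
  · simp
  have hT1 : (1 : ℝ) ≤ T := by exact_mod_cast hT
  rw [norm_smul, norm_smul, Real.norm_of_nonneg (Real.sqrt_nonneg _), mul_pow,
    Real.sq_sqrt (by positivity), Real.norm_natCast, abs_mul, Nat.abs_cast]
  calc (T : ℝ) * |frobSq (Aᵀ * H * A) - frobSq H|
      ≤ T * (‖H‖ ^ 2 * (2 * ‖A * Aᵀ - 1‖ + ‖A * Aᵀ - 1‖ ^ 2)) :=
        mul_le_mul_of_nonneg_left (abs_frobSq_transpose_mul_mul_sub_le H A) (by positivity)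
    _ ≤ ‖H‖ ^ 2 * (2 * (T * ‖A * Aᵀ - 1‖) + (T * ‖A * Aᵀ - 1‖) ^ 2) := by
        have : (T : ℝ) * ‖A * Aᵀ - 1‖ ^ 2 ≤ (T * ‖A * Aᵀ - 1‖) ^ 2 := by
          nlinarith [sq_nonneg ‖A * Aᵀ - 1‖]
        nlinarith [sq_nonneg ‖H‖]
    _ = _ := by
        rw [abs_of_nonneg (by positivity)]
        field_simp

theorem statement12_general {Ω : Type*} [MeasurableSpace Ω] (μ : Measure Ω)
    (r : ℕ)
    (H : ℕ → Ω → Matrix (Fin r) (Fin r) ℝ)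
    (hHop : MatIsOp μ fun T ω => Real.sqrt T • H T ω)
    (A : ℕ → Ω → Matrix (Fin r) (Fin r) ℝ)
    (hAop : MatIsOp μ fun T ω => (T : ℝ) • (A T ω * (A T ω)ᵀ - 1)) :
    RealTendstoP0 μ fun T ω =>
      (T : ℝ) * (frobSq ((A T ω)ᵀ * H T ω * A T ω) - frobSq (H T ω)) := by
  have hW := (hHop.isBoundedInProb_norm.comp₂ hAop.isBoundedInProb_norm
    (g := fun x y => x ^ 2 * (2 * y + y ^ 2)) (by fun_prop)).realTendstoP0_mul
    tendsto_inv_atTop_nhds_zero_nat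
  exact hW.of_abs_le fun T ω => abs_natCast_mul_frobSq_sub_le T (H T ω) (A T ω)

theorem statement12 {Ω : Type*} [MeasurableSpace Ω] (μ : Measure Ω) [IsProbabilityMeasure μ]
    (r : ℕ) (hr : 1 ≤ r)
    (H : ℕ → Ω → Matrix (Fin r) (Fin r) ℝ)
    (hHmeas : ∀ T i j, Measurable fun ω => H T ω i j)
    (hHsym : ∀ T ω, (H T ω)ᵀ = H T ω)
    (hHop : MatIsOp μ fun T ω => Real.sqrt T • H T ω)
    (A : ℕ → Ω → Matrix (Fin r) (Fin r) ℝ)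
    (hAmeas : ∀ T i j, Measurable fun ω => A T ω i j)
    (hAop : MatIsOp μ fun T ω => (T : ℝ) • (A T ω * (A T ω)ᵀ - 1)) :
    RealTendstoP0 μ fun T ω =>
      (T : ℝ) * (frobSq ((A T ω)ᵀ * H T ω * A T ω) - frobSq (H T ω)) :=
  statement12_general μ r H hHop A hAop
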